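/- arXiv:1907.03086 — 6 statements merged into one kernel-verified Lean document; each statement's English description precedes it below -/
import Mathlib

section
/- Let (λ_j) be an i.i.d. sequence of real random variables with the exponential distribution of rate 1, and set Γ_k = λ_1 + ⋯ + λ_k. Then for every κ > 1, the series ∑_{k=1}^∞ Γ_k^{-κ} converges almost surely. -/
/-!
By the strong law of large numbers, `Γ_k / k → 𝔼 λ_1 = 1` almost surely, so eventually
`Γ_k ≥ k / 2` and `Γ_k ^ (-κ) ≤ 2 ^ κ k ^ (-κ)`, which is summable for `κ > 1`.
-/

open MeasureTheory ProbabilityTheory Filter Real Set Topology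

lemma integral_id_gammaMeasure {a r : ℝ} (ha : 0 < a) (hr : 0 < r) :
    ∫ x, x ∂gammaMeasure a r = a / r := by
  have hdens : ∀ x, 0 ≤ gammaPDFReal a r x := gammaPDFReal_nonneg ha hr
  calc ∫ x, x ∂gammaMeasure a r
      = ∫ x, (gammaPDFReal a r x).toNNReal • x :=
        integral_withDensity_eq_integral_smul (measurable_gammaPDFReal a r).real_toNNReal _
    _ = ∫ x in Ioi 0, r ^ a / Gamma a * (x ^ (a + 1 - 1) * exp (-(r * x))) := by
        rw [← integral_indicator measurableSet_Ioi]
        congr 1 with x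
        rw [NNReal.smul_def, Real.coe_toNNReal _ (hdens x), smul_eq_mul]
        rcases lt_or_ge 0 x with hx | hx
        · rw [indicator_of_mem (mem_Ioi.2 hx), gammaPDFReal, if_pos hx.le,
            rpow_sub_one hx.ne', add_sub_cancel_right]
          field_simp
        · rw [indicator_of_notMem (notMem_Ioi.2 hx)]
          rcases hx.lt_or_eq with hx | rfl
          · rw [gammaPDFReal, if_neg (not_le.2 hx), zero_mul]
          · rw [mul_zero]
    _ = a / r := by
        rw [integral_const_mul, integral_rpow_mul_exp_neg_mul_Ioi (by linarith) hr,
          Gamma_add_one ha.ne', rpow_add_one (by positivity), div_rpow zero_le_one hr.le, one_rpow]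
        field_simp [(Gamma_pos_of_pos ha).ne', (rpow_pos_of_pos hr a).ne']

lemma integrable_id_gammaMeasure {a r : ℝ} (ha : 0 < a) (hr : 0 < r) :
    Integrable id (gammaMeasure a r) :=
  .of_integral_ne_zero <| by
    simp only [id, integral_id_gammaMeasure ha hr]; positivity

lemma summable_rpow_neg_of_tendsto_div_natCast {S : ℕ → ℝ} {m κ : ℝ} (hm : 0 < m) (hκ : 1 < κ)
    (hS : Tendsto (fun n : ℕ => S n / n) atTop (𝓝 m)) :
    Summable fun n => S n ^ (-κ) := by
  refine ((summable_nat_rpow.2 (by linarith : -κ < -1)).mul_left ((m / 2) ^ (-κ)))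
    |>.of_norm_bounded_eventually_nat ?_
  filter_upwards [hS.eventually_const_lt (half_lt_self hm), eventually_gt_atTop 0] with n hn hn0
  have hn0' : (0 : ℝ) < n := Nat.cast_pos.2 hn0
  have hlin : m / 2 * n ≤ S n := ((lt_div_iff₀ hn0').1 hn).le
  have hpos : 0 < m / 2 * n := by positivity
  rw [norm_of_nonneg (rpow_nonneg (hpos.le.trans hlin) _), ← mul_rpow (by positivity) hn0'.le]
  exact rpow_le_rpow_of_nonpos hpos hlin (by linarith)

lemma ae_tendsto_avg_of_pairwise_indepFun {Ω : Type*} [MeasurableSpace Ω] {P : Measure Ω}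
    {X : ℕ → Ω → ℝ} {μ : Measure ℝ} (hX : ∀ i, AEMeasurable (X i) P)
    (hindep : Pairwise fun i j => X i ⟂ᵢ[P] X j) (hlaw : ∀ i, P.map (X i) = μ)
    (hint : Integrable id μ) :
    ∀ᵐ ω ∂P, Tendsto (fun n : ℕ => (∑ i ∈ Finset.range n, X i ω) / n) atTop
      (𝓝 (∫ x, x ∂μ)) := by
  have hident : ∀ i, IdentDistrib (X i) (X 0) P P := fun i =>
    ⟨hX i, hX 0, by rw [hlaw i, hlaw 0]⟩
  rw [← hlaw 0] at hint ⊢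
  rw [integral_map (f := fun x => x) (hX 0) aestronglyMeasurable_id]
  exact strong_law_ae_real X ((integrable_map_measure aestronglyMeasurable_id (hX 0)).1 hint)
    hindep hident

theorem poisson_arrival_summable_rpow_general
    {Ω : Type*} [MeasureSpace Ω]
    (lam : ℕ → Ω → ℝ)
    (hmeas : ∀ j, Measurable (lam j))
    (hindep : iIndepFun lam ℙ)
    (hlaw : ∀ j, Measure.map (lam j) ℙ = expMeasure 1)
    (κ : ℝ) (hκ : 1 < κ) :
    ∀ᵐ ω ∂(ℙ : Measure Ω),
      Summable (fun k : ℕ => (∑ j ∈ Finset.range (k + 1), lam j ω) ^ (-κ)) := by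
  have hslln := ae_tendsto_avg_of_pairwise_indepFun (fun j => (hmeas j).aemeasurable)
    (fun _ _ hij => hindep.indepFun hij) hlaw (integrable_id_gammaMeasure one_pos one_pos)
  filter_upwards [hslln] with ω hω
  rw [expMeasure, integral_id_gammaMeasure one_pos one_pos, div_one] at hω
  exact (summable_nat_add_iff 1).2 (summable_rpow_neg_of_tendsto_div_natCast one_pos hκ hω)

/-- If `(λ_j)` is an i.i.d. sequence of real random variables with the
exponential distribution of rate 1 and `Γ_k = λ_1 + ⋯ + λ_k`, then for every `κ > 1` the series
`∑_{k=1}^∞ Γ_k^{-κ}` converges almost surely. -/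
theorem poisson_arrival_summable_rpow
    {Ω : Type*} [MeasureSpace Ω] [IsProbabilityMeasure (ℙ : Measure Ω)]
    (lam : ℕ → Ω → ℝ)
    (hmeas : ∀ j, Measurable (lam j))
    (hindep : iIndepFun lam ℙ)
    (hlaw : ∀ j, Measure.map (lam j) ℙ = expMeasure 1)
    (κ : ℝ) (hκ : 1 < κ) :
    ∀ᵐ ω ∂(ℙ : Measure Ω),
      Summable (fun k : ℕ => (∑ j ∈ Finset.range (k + 1), lam j ω) ^ (-κ)) :=
  poisson_arrival_summable_rpow_general lam hmeas hindep hlaw κ hκ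
end

section
/- Let F and G be separable Banach spaces, μ a Borel probability measure on F, and Φ : F × G → ℝ a jointly measurable function, and let D_μ ⊆ G. Assume (WD1) for every y ∈ D_μ the function u ↦ exp(−Φ(u,y)) is μ-integrable, and (WD2) Φ is bounded on bounded subsets of F × G. Then for every y ∈ D_μ the normalizing constant Z_y = ∫_F exp(−Φ(u,y)) μ(du) satisfies 0 < Z_y < ∞, i.e. the posterior distribution μ^y(A) = Z_y^{-1} ∫_A exp(−Φ(u,y)) μ(du) is well-defined on D_μ. -/
open MeasureTheory Filter

/-- Let `F`, `G` be separable Banach spaces, `μ` a Borel probability measure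
on `F`, `Φ : F × G → ℝ` jointly measurable and `D_μ ⊆ G`.  Assume (WD1) for every `y ∈ D_μ`
the function `u ↦ exp(−Φ(u,y))` is `μ`-integrable, and (WD2) `Φ` is bounded on bounded subsets
of `F × G`.  Then for every `y ∈ D_μ` the normalizing constant
`Z_y = ∫_F exp(−Φ(u,y)) μ(du)` satisfies `0 < Z_y < ∞`, i.e. the posterior distribution is
well-defined on `D_μ`. -/
theorem posterior_well_defined
    {F G : Type*}
    [NormedAddCommGroup F] [NormedSpace ℝ F] [CompleteSpace F]
    [TopologicalSpace.SeparableSpace F] [MeasurableSpace F] [BorelSpace F]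
    [NormedAddCommGroup G] [NormedSpace ℝ G] [CompleteSpace G]
    [TopologicalSpace.SeparableSpace G] [MeasurableSpace G] [BorelSpace G]
    (μ : Measure F) [IsProbabilityMeasure μ]
    (Φ : F × G → ℝ) (hΦmeas : Measurable Φ)
    (D : Set G)
    (hWD1 : ∀ y ∈ D, Integrable (fun u => Real.exp (-Φ (u, y))) μ)
    (hWD2 : ∀ S : Set (F × G), Bornology.IsBounded S → ∃ C : ℝ, ∀ z ∈ S, |Φ z| ≤ C) :
    ∀ y ∈ D,
      0 < ∫⁻ u, ENNReal.ofReal (Real.exp (-Φ (u, y))) ∂μ ∧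
      ∫⁻ u, ENNReal.ofReal (Real.exp (-Φ (u, y))) ∂μ < ⊤ := by
  intro y hy
  constructor
  · have hm : Measurable (fun u : F => ENNReal.ofReal (Real.exp (-Φ (u, y)))) :=
      ((hΦmeas.comp (measurable_id.prodMk measurable_const)).neg.exp).ennreal_ofReal
    rw [lintegral_pos_iff_support hm]
    have : Function.support (fun u => ENNReal.ofReal (Real.exp (-Φ (u, y)))) = Set.univ := by
      ext u
      simp [Function.mem_support, ENNReal.ofReal_eq_zero, not_le, Real.exp_pos]
    rw [this]
    simp
  · exact (hWD1 y hy).lintegral_lt_top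
end

section
/- Let F and G be separable Banach spaces, μ a Borel probability measure on F, Φ : F × G → ℝ jointly measurable, and D_μ ⊆ G. Assume (WD1) for every y ∈ D_μ the function u ↦ exp(−Φ(u,y)) is μ-integrable; (WD2) Φ is bounded on bounded subsets of F × G; (WP1) the map y ↦ Z_y = ∫_F exp(−Φ(u,y)) μ(du) is continuous on D_μ in the relative topology; and (WP2) for every u ∈ F the map y ↦ Φ(u,y) is continuous on G. Then the posterior distribution is well-posed on D_μ in the weak topology: for every sequence y_k → y with y_k, y ∈ D_μ and every bounded continuous function f : F → ℝ, ∫_F f dμ^{y_k} → ∫_F f dμ^y. -/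
/-!
The posterior `μ^y` is the exponential tilt of `μ` by `-Φ(·, y)`, with density
`p_y = exp(-Φ(·, y)) / Z_y`. Along `y_k → y`, (WP2) gives `p_{y_k} → p_y` pointwise and (WP1)
gives `∫ p_{y_k} dμ → ∫ p_y dμ`, so Scheffé's lemma upgrades this to `p_{y_k} → p_y` in `L¹(μ)`,
i.e. convergence of the posteriors in total variation, which controls `∫ f dμ^{y_k}` for every
bounded measurable `f`.
-/

open MeasureTheory Filter

/-- The posterior distribution `μ^y ∝ exp(−Φ(u,y)) μ(du)`:
the normalized measure with density `exp(−Φ(·,y))` with respect to the prior `μ`. -/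
noncomputable def posteriorMeasure {F G : Type*} [MeasurableSpace F]
    (μ : Measure F) (Φ : F × G → ℝ) (y : G) : Measure F :=
  (∫⁻ u, ENNReal.ofReal (Real.exp (-Φ (u, y))) ∂μ)⁻¹ •
    μ.withDensity (fun u => ENNReal.ofReal (Real.exp (-Φ (u, y))))

open Real
open scoped Topology

section Scheffe

variable {α ι : Type*} [MeasurableSpace α] {μ : Measure α} {l : Filter ι}

lemma abs_sub_eq_sub_add_two_mul_max (a b : ℝ) : |a - b| = a - b + 2 * max (b - a) 0 := by
  rcases le_total a b with h | h
  · rw [abs_of_nonpos (sub_nonpos.mpr h), max_eq_left (sub_nonneg.mpr h)]; ring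
  · rw [abs_of_nonneg (sub_nonneg.mpr h), max_eq_right (sub_nonpos.mpr h)]; ring

theorem tendsto_integral_abs_sub_of_tendsto_integral [l.IsCountablyGenerated]
    {g : ι → α → ℝ} {g₀ : α → ℝ} (hg : ∀ i, Integrable (g i) μ) (hg₀ : Integrable g₀ μ)
    (hg_nonneg : ∀ i, 0 ≤ᵐ[μ] g i) (hlim : ∀ᵐ x ∂μ, Tendsto (fun i => g i x) l (𝓝 (g₀ x)))
    (hmass : Tendsto (fun i => ∫ x, g i x ∂μ) l (𝓝 (∫ x, g₀ x ∂μ))) :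
    Tendsto (fun i => ∫ x, |g i x - g₀ x| ∂μ) l (𝓝 0) := by
  -- `|g i - g₀| = (g i - g₀) + 2 (g₀ - g i)⁺`, and `0 ≤ (g₀ - g i)⁺ ≤ |g₀|` because `g i ≥ 0`.
  have hdefect_int : ∀ i, Integrable (fun x => max (g₀ x - g i x) 0) μ :=
    fun i => (hg₀.sub (hg i)).pos_part
  have hdefect : Tendsto (fun i => ∫ x, max (g₀ x - g i x) 0 ∂μ) l (𝓝 0) := by
    simpa using tendsto_integral_filter_of_dominated_convergence (f := fun _ => 0)
      (fun x => ‖g₀ x‖)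
      (.of_forall fun i => (hdefect_int i).1)
      (.of_forall fun i => (hg_nonneg i).mono fun x hx => by
        simp only [Pi.zero_apply, Real.norm_eq_abs] at hx ⊢
        rw [abs_of_nonneg (le_max_right _ _)]
        exact max_le (by linarith [le_abs_self (g₀ x)]) (abs_nonneg _))
      hg₀.norm (hlim.mono fun x hx => by
        simpa using
          ((tendsto_const_nhds (x := g₀ x)).sub hx).max (tendsto_const_nhds (x := (0 : ℝ))))
  have hsplit : ∀ i, ∫ x, |g i x - g₀ x| ∂μ
      = (∫ x, g i x ∂μ - ∫ x, g₀ x ∂μ) + 2 * ∫ x, max (g₀ x - g i x) 0 ∂μ := fun i => by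
    have hdiff : Integrable (fun x => g i x - g₀ x) μ := (hg i).sub hg₀
    simp_rw [abs_sub_eq_sub_add_two_mul_max]
    rw [integral_add hdiff ((hdefect_int i).const_mul 2), integral_sub (hg i) hg₀,
      integral_const_mul]
  simp_rw [hsplit]
  simpa using (hmass.sub (tendsto_const_nhds (x := ∫ x, g₀ x ∂μ))).add (hdefect.const_mul 2)

theorem tendsto_integral_mul_of_tendsto_integral_abs_sub
    {g : ι → α → ℝ} {g₀ f : α → ℝ} {C : ℝ} (hg : ∀ i, Integrable (g i) μ)
    (hg₀ : Integrable g₀ μ) (hf : AEStronglyMeasurable f μ) (hfC : ∀ᵐ x ∂μ, |f x| ≤ C)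
    (hL1 : Tendsto (fun i => ∫ x, |g i x - g₀ x| ∂μ) l (𝓝 0)) :
    Tendsto (fun i => ∫ x, g i x * f x ∂μ) l (𝓝 (∫ x, g₀ x * f x ∂μ)) := by
  have hfC' : ∀ᵐ x ∂μ, ‖f x‖ ≤ C := hfC
  rw [tendsto_iff_norm_sub_tendsto_zero]
  refine squeeze_zero (fun i => norm_nonneg _) (fun i => ?_) (by simpa using hL1.const_mul C)
  calc ‖∫ x, g i x * f x ∂μ - ∫ x, g₀ x * f x ∂μ‖
      = ‖∫ x, (g i x - g₀ x) * f x ∂μ‖ := by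
        rw [← integral_sub ((hg i).mul_bdd hf hfC') (hg₀.mul_bdd hf hfC')]
        simp_rw [sub_mul]
    _ ≤ ∫ x, C * |g i x - g₀ x| ∂μ := by
        refine norm_integral_le_of_norm_le (((hg i).sub hg₀).abs.const_mul C)
          (hfC.mono fun x hx => ?_)
        rw [Real.norm_eq_abs, abs_mul, mul_comm]
        exact mul_le_mul_of_nonneg_right hx (abs_nonneg _)
    _ = C * ∫ x, |g i x - g₀ x| ∂μ := integral_const_mul _ _

end Scheffe

section Posterior

variable {F G : Type*} [MeasurableSpace F] {μ : Measure F} {Φ : F × G → ℝ} {y : G}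

lemma posteriorMeasure_eq_tilted [NeZero μ]
    (h : Integrable (fun u => exp (-Φ (u, y))) μ) :
    posteriorMeasure μ Φ y = μ.tilted (fun u => -Φ (u, y)) := by
  have hZ := integral_exp_pos h
  rw [posteriorMeasure, Measure.tilted, ← ofReal_integral_eq_lintegral_ofReal h
    (.of_forall fun u => (exp_pos _).le), ← withDensity_smul' _ _ (by simpa using hZ)]
  congr 1
  ext u
  simp [div_eq_mul_inv, ENNReal.ofReal_mul (exp_pos _).le, ENNReal.ofReal_inv_of_pos hZ, mul_comm]

lemma integral_posteriorMeasure [NeZero μ]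
    (h : Integrable (fun u => exp (-Φ (u, y))) μ) (f : F → ℝ) :
    ∫ u, f u ∂(posteriorMeasure μ Φ y)
      = ∫ u, exp (-Φ (u, y)) / (∫ v, exp (-Φ (v, y)) ∂μ) * f u ∂μ := by
  rw [posteriorMeasure_eq_tilted h, integral_tilted]
  rfl

end Posterior

theorem posterior_well_posed_weak_general
    {F G : Type*}
    [NormedAddCommGroup F] [MeasurableSpace F] [BorelSpace F]
    [NormedAddCommGroup G]
    (μ : Measure F) [IsProbabilityMeasure μ]
    (Φ : F × G → ℝ)
    (D : Set G)
    (hWD1 : ∀ y ∈ D, Integrable (fun u => Real.exp (-Φ (u, y))) μ)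
    (hWP1 : ContinuousOn (fun y => ∫ u, Real.exp (-Φ (u, y)) ∂μ) D)
    (hWP2 : ∀ u : F, Continuous (fun y => Φ (u, y))) :
    ∀ (ys : ℕ → G) (y : G), (∀ k, ys k ∈ D) → y ∈ D → Tendsto ys atTop (nhds y) →
      ∀ f : F → ℝ, Continuous f → (∃ C : ℝ, ∀ u, |f u| ≤ C) →
        Tendsto (fun k => ∫ u, f u ∂(posteriorMeasure μ Φ (ys k))) atTop
          (nhds (∫ u, f u ∂(posteriorMeasure μ Φ y))) := by
  intro ys y hys hy hlim f hf ⟨C, hfC⟩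
  set Z : G → ℝ := fun y => ∫ u, exp (-Φ (u, y)) ∂μ
  set p : G → F → ℝ := fun y u => exp (-Φ (u, y)) / Z y
  have hp_int : ∀ y ∈ D, Integrable (p y) μ := fun y hy => (hWD1 y hy).div_const _
  have hZ : Tendsto (fun k => Z (ys k)) atTop (𝓝 (Z y)) :=
    (hWP1 y hy).tendsto.comp (tendsto_nhdsWithin_iff.mpr ⟨hlim, .of_forall hys⟩)
  have hZy : Z y ≠ 0 := (integral_exp_pos (hWD1 y hy)).ne'
  have hp_lim : ∀ u, Tendsto (fun k => p (ys k) u) atTop (𝓝 (p y u)) := fun u =>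
    (((continuous_exp.comp (hWP2 u).neg).tendsto y).comp hlim).div hZ hZy
  have hp_mass : Tendsto (fun k => ∫ u, p (ys k) u ∂μ) atTop (𝓝 (∫ u, p y u ∂μ)) := by
    simp only [p, integral_div]
    exact hZ.div hZ hZy
  have hL1 := tendsto_integral_abs_sub_of_tendsto_integral (fun k => hp_int _ (hys k))
    (hp_int y hy) (fun k => .of_forall fun u => by positivity) (.of_forall hp_lim) hp_mass
  simp only [integral_posteriorMeasure (hWD1 _ (hys _)), integral_posteriorMeasure (hWD1 y hy)]
  exact tendsto_integral_mul_of_tendsto_integral_abs_sub (fun k => hp_int _ (hys k))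
    (hp_int y hy) hf.aestronglyMeasurable (.of_forall hfC) hL1

/-- Under (WD1), (WD2), (WP1) (continuity of the normalizing constants on
`D_μ`) and (WP2) (continuity of `y ↦ Φ(u,y)` for each `u`), the posterior distribution is
well-posed on `D_μ` in the weak topology: for every sequence `y_k → y` in `D_μ` and every
bounded continuous `f : F → ℝ`, `∫ f dμ^{y_k} → ∫ f dμ^y`. -/
theorem posterior_well_posed_weak
    {F G : Type*}
    [NormedAddCommGroup F] [NormedSpace ℝ F] [CompleteSpace F]
    [TopologicalSpace.SeparableSpace F] [MeasurableSpace F] [BorelSpace F]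
    [NormedAddCommGroup G] [NormedSpace ℝ G] [CompleteSpace G]
    [TopologicalSpace.SeparableSpace G] [MeasurableSpace G] [BorelSpace G]
    (μ : Measure F) [IsProbabilityMeasure μ]
    (Φ : F × G → ℝ) (hΦmeas : Measurable Φ)
    (D : Set G)
    (hWD1 : ∀ y ∈ D, Integrable (fun u => Real.exp (-Φ (u, y))) μ)
    (hWD2 : ∀ S : Set (F × G), Bornology.IsBounded S → ∃ C : ℝ, ∀ z ∈ S, |Φ z| ≤ C)
    (hWP1 : ContinuousOn (fun y => ∫ u, Real.exp (-Φ (u, y)) ∂μ) D)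
    (hWP2 : ∀ u : F, Continuous (fun y => Φ (u, y))) :
    ∀ (ys : ℕ → G) (y : G), (∀ k, ys k ∈ D) → y ∈ D → Tendsto ys atTop (nhds y) →
      ∀ f : F → ℝ, Continuous f → (∃ C : ℝ, ∀ u, |f u| ≤ C) →
        Tendsto (fun k => ∫ u, f u ∂(posteriorMeasure μ Φ (ys k))) atTop
          (nhds (∫ u, f u ∂(posteriorMeasure μ Φ y))) :=
  posterior_well_posed_weak_general μ Φ D hWD1 hWP1 hWP2
end

section
/- Let F and G be separable Banach spaces, μ a Borel probability measure on F, Φ : F × G → ℝ jointly measurable, and D_μ ⊆ G an open set. Assume (WD1) for every y ∈ D_μ the function u ↦ exp(−Φ(u,y)) is μ-integrable; (WD2) Φ is bounded on bounded subsets of F × G; (WP1) the map y ↦ Z_y = ∫_F exp(−Φ(u,y)) μ(du) is continuous on D_μ; and (WP3) for every bounded subset B of F, the family of functions y ↦ Φ(u,y), u ∈ B, is uniformly equicontinuous on G. Then the posterior distribution is well-posed on D_μ in the total variation metric: for every sequence y_k → y with y_k, y ∈ D_μ, sup_{A Borel ⊆ F} |μ^{y_k}(A) − μ^y(A)| → 0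 as k → ∞. -/
open MeasureTheory Filter

/-- Under (WD1), (WD2), (WP1) and (WP3) (for every bounded `B ⊆ F`, the
family `y ↦ Φ(u,y)`, `u ∈ B`, is uniformly equicontinuous on `G`), the posterior distribution
is well-posed on the open set `D_μ` in the total variation metric: for `y_k → y` in `D_μ`,
`sup_{A Borel} |μ^{y_k}(A) − μ^y(A)| → 0`. -/
theorem posterior_well_posed_tv
    {F G : Type*}
    [NormedAddCommGroup F] [NormedSpace ℝ F] [CompleteSpace F]
    [TopologicalSpace.SeparableSpace F] [MeasurableSpace F] [BorelSpace F]
    [NormedAddCommGroup G] [NormedSpace ℝ G] [CompleteSpace G]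
    [TopologicalSpace.SeparableSpace G] [MeasurableSpace G] [BorelSpace G]
    (μ : Measure F) [IsProbabilityMeasure μ]
    (Φ : F × G → ℝ) (hΦmeas : Measurable Φ)
    (D : Set G) (hD : IsOpen D)
    (hWD1 : ∀ y ∈ D, Integrable (fun u => Real.exp (-Φ (u, y))) μ)
    (hWD2 : ∀ S : Set (F × G), Bornology.IsBounded S → ∃ C : ℝ, ∀ z ∈ S, |Φ z| ≤ C)
    (hWP1 : ContinuousOn (fun y => ∫ u, Real.exp (-Φ (u, y)) ∂μ) D)
    (hWP3 : ∀ B : Set F, Bornology.IsBounded B →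
      UniformEquicontinuous (fun (u : B) => fun y : G => Φ ((u : F), y))) :
    ∀ (ys : ℕ → G) (y : G), (∀ k, ys k ∈ D) → y ∈ D → Tendsto ys atTop (nhds y) →
      ∀ ε : ℝ, 0 < ε → ∃ N : ℕ, ∀ k ≥ N, ∀ A : Set F, MeasurableSet A →
        |(posteriorMeasure μ Φ (ys k) A).toReal - (posteriorMeasure μ Φ y A).toReal| < ε := by
  intro ys y hys hy hty ε hε
  set f : G → F → ℝ := fun y' u => Real.exp (-Φ (u, y')) with hf_def
  set Z : G → ℝ := fun y' => ∫ u, f y' u ∂μ with hZ_def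
  -- basic facts
  have hmeas : ∀ y', Measurable (f y') := fun y' =>
    ((hΦmeas.comp (measurable_id.prodMk measurable_const)).neg).exp
  have hnn : ∀ y' u, 0 ≤ f y' u := fun y' u => (Real.exp_pos _).le
  have hint : ∀ y' ∈ D, Integrable (f y') μ := hWD1
  have hZpos : ∀ y' ∈ D, 0 < Z y' := by
    intro y' hy'
    rw [hZ_def]
    rw [integral_pos_iff_support_of_nonneg (hnn y') (hint y' hy')]
    have : Function.support (f y') = Set.univ := by
      ext u; simp [hf_def, Real.exp_ne_zero]
    rw [this]
    simp
  -- pointwise convergence of Φ in y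
  have hptΦ : ∀ u : F, Tendsto (fun k => Φ (u, ys k)) atTop (nhds (Φ (u, y))) := by
    intro u
    have hb : Bornology.IsBounded ({u} : Set F) := Bornology.isBounded_singleton
    have h := (hWP3 _ hb).uniformContinuous ⟨u, rfl⟩
    exact (h.continuous.tendsto y).comp hty
  have hpt : ∀ u : F, Tendsto (fun k => f (ys k) u) atTop (nhds (f y u)) := by
    intro u
    exact (Real.continuous_exp.tendsto _).comp ((hptΦ u).neg)
  -- Z (ys k) → Z y
  have hZty : Tendsto (fun k => Z (ys k)) atTop (nhds (Z y)) := by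
    have h1 : Tendsto ys atTop (nhdsWithin y D) :=
      tendsto_nhdsWithin_of_tendsto_nhds_of_eventually_within ys hty
        (Eventually.of_forall hys)
    exact (hWP1 y hy).tendsto.comp h1
  -- min integrable
  have hmin_int : ∀ k, Integrable (fun u => min (f (ys k) u) (f y u)) μ := by
    intro k
    refine (hint y hy).mono ((hmeas (ys k)).min (hmeas y)).aestronglyMeasurable ?_
    filter_upwards with u
    rw [Real.norm_eq_abs, Real.norm_eq_abs, abs_of_nonneg (le_min (hnn _ u) (hnn _ u)),
      abs_of_nonneg (hnn y u)]
    exact min_le_right _ _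
  -- DCT: ∫ min → Z y
  have hMty : Tendsto (fun k => ∫ u, min (f (ys k) u) (f y u) ∂μ) atTop (nhds (Z y)) := by
    refine tendsto_integral_of_dominated_convergence (f y)
      (fun k => ((hmeas (ys k)).min (hmeas y)).aestronglyMeasurable) (hint y hy) ?_ ?_
    · intro k
      filter_upwards with u
      rw [Real.norm_eq_abs, abs_of_nonneg (le_min (hnn _ u) (hnn _ u))]
      exact min_le_right _ _
    · filter_upwards with u
      have := (hpt u).min (tendsto_const_nhds (x := f y u))
      simpa using this
  -- ∫ |f_k − f| → 0
  have habs_eq : ∀ k, (∫ u, |f (ys k) u - f y u| ∂μ)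
      = Z (ys k) + Z y - 2 * ∫ u, min (f (ys k) u) (f y u) ∂μ := by
    intro k
    have heq : ∀ u, |f (ys k) u - f y u|
        = f (ys k) u + f y u - 2 * min (f (ys k) u) (f y u) := by
      intro u
      rcases le_total (f (ys k) u) (f y u) with h | h
      · rw [abs_of_nonpos (by linarith), min_eq_left h]; ring
      · rw [abs_of_nonneg (by linarith), min_eq_right h]; ring
    simp_rw [heq]
    have hadd : Integrable (fun u => f (ys k) u + f y u) μ := (hint _ (hys k)).add (hint y hy)
    have hmul : Integrable (fun u => 2 * min (f (ys k) u) (f y u)) μ := (hmin_int k).const_mul 2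
    rw [integral_sub hadd hmul, integral_add (hint _ (hys k)) (hint y hy), integral_const_mul]
  have habs_ty : Tendsto (fun k => ∫ u, |f (ys k) u - f y u| ∂μ) atTop (nhds 0) := by
    have : Tendsto (fun k => Z (ys k) + Z y - 2 * ∫ u, min (f (ys k) u) (f y u) ∂μ)
        atTop (nhds (Z y + Z y - 2 * Z y)) :=
      (hZty.add tendsto_const_nhds).sub (hMty.const_mul 2)
    simp_rw [habs_eq]
    convert this using 2
    ring
  -- posterior toReal formula
  have key : ∀ y' ∈ D, ∀ A : Set F, MeasurableSet A →
      (posteriorMeasure μ Φ y' A).toReal = (∫ u in A, f y' u ∂μ) / Z y' := by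
    intro y' hy' A hA
    have hL : (∫⁻ u, ENNReal.ofReal (f y' u) ∂μ) = ENNReal.ofReal (Z y') :=
      (ofReal_integral_eq_lintegral_ofReal (hint y' hy')
        (Eventually.of_forall (hnn y'))).symm
    have hLA : (∫⁻ u in A, ENNReal.ofReal (f y' u) ∂μ)
        = ENNReal.ofReal (∫ u in A, f y' u ∂μ) :=
      (ofReal_integral_eq_lintegral_ofReal ((hint y' hy').restrict)
        (Eventually.of_forall (hnn y'))).symm
    rw [posteriorMeasure, Measure.smul_apply, smul_eq_mul,
      withDensity_apply _ hA]
    show ((∫⁻ u, ENNReal.ofReal (f y' u) ∂μ)⁻¹ * ∫⁻ u in A, ENNReal.ofReal (f y' u) ∂μ).toReal = _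
    rw [hL, hLA, ENNReal.toReal_mul, ENNReal.toReal_inv, ENNReal.toReal_ofReal
        (hZpos y' hy').le, ENNReal.toReal_ofReal (integral_nonneg (fun u => hnn y' u))]
    rw [div_eq_inv_mul]
  -- the uniform bound
  set B : ℕ → ℝ := fun k =>
    (∫ u, |f (ys k) u - f y u| ∂μ) / Z (ys k) + Z y * |1 / Z (ys k) - 1 / Z y| with hB_def
  have hBty : Tendsto B atTop (nhds 0) := by
    have h1 : Tendsto (fun k => (∫ u, |f (ys k) u - f y u| ∂μ) / Z (ys k)) atTop
        (nhds (0 / Z y)) := habs_ty.div hZty (hZpos y hy).ne'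
    have h2 : Tendsto (fun k => Z y * |1 / Z (ys k) - 1 / Z y|) atTop
        (nhds (Z y * |1 / Z y - 1 / Z y|)) := by
      refine Tendsto.const_mul _ ?_
      exact ((tendsto_const_nhds.div hZty (hZpos y hy).ne').sub tendsto_const_nhds).abs
    have := h1.add h2
    rw [hB_def]
    simpa using this
  have hBev : ∀ᶠ k in atTop, B k < ε := by
    have := hBty
    rw [Metric.tendsto_atTop] at this
    obtain ⟨N, hN⟩ := this ε hε
    filter_upwards [eventually_ge_atTop N] with k hk
    have := hN k hk
    rw [Real.dist_eq, sub_zero] at this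
    exact lt_of_le_of_lt (le_abs_self _) this
  obtain ⟨N, hN⟩ := hBev.exists_forall_of_atTop
  refine ⟨N, fun k hk A hA => ?_⟩
  rw [key _ (hys k) A hA, key _ hy A hA]
  have hZk := hZpos _ (hys k)
  have hZy := hZpos _ hy
  set a := ∫ u in A, f (ys k) u ∂μ
  set b := ∫ u in A, f y u ∂μ
  have hbnn : 0 ≤ b := integral_nonneg (fun u => hnn y u)
  have hbZ : b ≤ Z y :=
    integral_mono_measure Measure.restrict_le_self
      (Eventually.of_forall (hnn y)) (hint y hy)
  have hab : |a - b| ≤ ∫ u, |f (ys k) u - f y u| ∂μ := by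
    have h1 : a - b = ∫ u in A, (f (ys k) u - f y u) ∂μ :=
      (integral_sub ((hint _ (hys k)).restrict) ((hint y hy).restrict)).symm
    rw [h1]
    calc |∫ u in A, (f (ys k) u - f y u) ∂μ| ≤ ∫ u in A, |f (ys k) u - f y u| ∂μ := by
          simpa [Real.norm_eq_abs] using
            norm_integral_le_integral_norm (μ := μ.restrict A) (fun u => f (ys k) u - f y u)
      _ ≤ ∫ u, |f (ys k) u - f y u| ∂μ :=
          integral_mono_measure Measure.restrict_le_self
            (Eventually.of_forall (fun u => abs_nonneg _))
            ((hint _ (hys k)).sub (hint y hy)).abs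
  have hdecomp : a / Z (ys k) - b / Z y = (a - b) / Z (ys k) + b * (1 / Z (ys k) - 1 / Z y) := by
    field_simp
    ring
  calc |a / Z (ys k) - b / Z y|
      = |(a - b) / Z (ys k) + b * (1 / Z (ys k) - 1 / Z y)| := by rw [hdecomp]
    _ ≤ |(a - b) / Z (ys k)| + |b * (1 / Z (ys k) - 1 / Z y)| := abs_add_le _ _
    _ ≤ (∫ u, |f (ys k) u - f y u| ∂μ) / Z (ys k) + Z y * |1 / Z (ys k) - 1 / Z y| := by
        gcongr
        · rw [abs_div, abs_of_pos hZk]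
          gcongr
        · rw [abs_mul, abs_of_nonneg hbnn]
          gcongr
    _ = B k := rfl
    _ < ε := hN k hk
end

section
/- Let d ≥ 1, 2 < p < ∞, q = p/(p−1) its conjugate exponent, and 0 ≤ s < 1/p. Then sup over x' ∈ [0,1]^d of the integral ∫_{ℝ^d} (1+|ξ|^2)^{sq/2} ∏_{ℓ=1}^d | 2 sin( ξ_ℓ (1 − x'_ℓ)/2 ) / ξ_ℓ |^q dξ is finite. -/
open MeasureTheory Filter
open scoped ENNReal

lemma aux_one_add_sum_le_prod {ι : Type*} (s : Finset ι) (f : ι → ℝ)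
    (h : ∀ i ∈ s, 0 ≤ f i) :
    1 + ∑ i ∈ s, f i ≤ ∏ i ∈ s, (1 + f i) := by
  induction s using Finset.cons_induction with
  | empty => simp
  | cons a s ha ih =>
    rw [Finset.sum_cons, Finset.prod_cons]
    have h1 : 0 ≤ f a := h a (Finset.mem_cons_self a s)
    have h2 : 1 + ∑ i ∈ s, f i ≤ ∏ i ∈ s, (1 + f i) :=
      ih fun i hi => h i (Finset.mem_cons_of_mem hi)
    have h3 : 0 ≤ ∑ i ∈ s, f i :=
      Finset.sum_nonneg fun i hi => h i (Finset.mem_cons_of_mem hi)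
    nlinarith

/-- Let `d ≥ 1`, `2 < p < ∞`, `q = p/(p−1)` and `0 ≤ s < 1/p`.  Then the
supremum over `x' ∈ [0,1]^d` of
`∫_{ℝ^d} (1+|ξ|²)^{sq/2} ∏_ℓ |2 sin(ξ_ℓ(1−x'_ℓ)/2)/ξ_ℓ|^q dξ` is finite. -/
theorem sup_fourier_box_integral_finite
    (d : ℕ) (hd : 1 ≤ d) (p q s : ℝ)
    (hp : 2 < p) (hq : q = p / (p - 1)) (hs0 : 0 ≤ s) (hs : s < 1 / p) :
    ∃ C : ℝ≥0∞, C < ⊤ ∧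
      ∀ x' : EuclideanSpace ℝ (Fin d), (∀ ℓ, x' ℓ ∈ Set.Icc (0:ℝ) 1) →
        (∫⁻ ξ : EuclideanSpace ℝ (Fin d),
          ENNReal.ofReal ((1 + ‖ξ‖ ^ 2) ^ (s * q / 2) *
            ∏ ℓ, |2 * Real.sin (ξ ℓ * (1 - x' ℓ) / 2) / ξ ℓ| ^ q)) ≤ C := by
  have hp0 : (0:ℝ) < p := by linarith
  have hp1 : (0:ℝ) < p - 1 := by linarith
  have hq1 : 1 < q := by
    rw [hq, lt_div_iff₀ hp1]; linarith
  have hq0 : (0:ℝ) < q := by linarith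
  have hsq0 : 0 ≤ s * q := mul_nonneg hs0 hq0.le
  have hr : 1 < q - s * q := by
    have h1 : s * p < 1 := by
      have := (lt_div_iff₀ hp0).mp (by rwa [one_div] at hs)
      linarith
    have he : q * ((p - 1) / p) = 1 := by
      rw [hq]; field_simp
    have h2 : (p - 1) / p < 1 - s := by
      rw [div_lt_iff₀ hp0]; nlinarith
    nlinarith [mul_lt_mul_of_pos_left h2 hq0]
  set a : ℝ := s * q / 2 with ha
  have ha0 : 0 ≤ a := by positivity
  set g : ℝ → ℝ := fun t => (1 + t ^ 2) ^ a * min 1 (2 / |t|) ^ q with hgdef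
  have hmin0 : ∀ t : ℝ, 0 ≤ min 1 (2 / |t|) := fun t =>
    le_min zero_le_one (div_nonneg two_pos.le (abs_nonneg t))
  have hg0 : ∀ t, 0 ≤ g t := fun t =>
    mul_nonneg (Real.rpow_nonneg (by positivity) _) (Real.rpow_nonneg (hmin0 t) _)
  have hmeas : Measurable g := by
    apply Measurable.mul
    · exact (measurable_const.add (measurable_id.pow_const 2)).pow measurable_const
    · exact (measurable_const.min (measurable_const.div measurable_abs)).pow measurable_const
  have hgle : ∀ t : ℝ, g t ≤ 4 ^ q * (1 + ‖t‖) ^ (-(q - s * q)) := by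
    intro t
    have h0t : (0:ℝ) < 1 + |t| := by positivity
    have h1 : (1 + t ^ 2) ^ a ≤ (1 + |t|) ^ (s * q) := by
      have hle : (1:ℝ) + t ^ 2 ≤ ((1 + |t|) ^ (2:ℕ)) := by
        nlinarith [abs_nonneg t, sq_abs t]
      calc (1 + t ^ 2) ^ a ≤ ((1 + |t|) ^ (2:ℕ)) ^ a :=
            Real.rpow_le_rpow (by positivity) hle ha0
        _ = (1 + |t|) ^ (s * q) := by
            rw [← Real.rpow_natCast (1 + |t|) 2, ← Real.rpow_mul h0t.le]
            norm_num [ha]; ring_nf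
    have h2 : min 1 (2 / |t|) ≤ 4 / (1 + |t|) := by
      rcases le_total (|t|) 1 with h | h
      · refine le_trans (min_le_left _ _) ?_
        rw [le_div_iff₀ h0t]; linarith
      · refine le_trans (min_le_right _ _) ?_
        have ht0 : (0:ℝ) < |t| := by linarith
        rw [div_le_div_iff₀ ht0 h0t]; linarith
    have h3 : min 1 (2 / |t|) ^ q ≤ 4 ^ q * (1 + |t|) ^ (-q) := by
      calc min 1 (2 / |t|) ^ q ≤ (4 / (1 + |t|)) ^ q :=
            Real.rpow_le_rpow (hmin0 t) h2 hq0.le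
        _ = 4 ^ q * (1 + |t|) ^ (-q) := by
            rw [Real.div_rpow (by norm_num) h0t.le, Real.rpow_neg h0t.le, div_eq_mul_inv]
    calc g t ≤ (1 + |t|) ^ (s * q) * (4 ^ q * (1 + |t|) ^ (-q)) :=
          mul_le_mul h1 h3 (Real.rpow_nonneg (hmin0 t) _) (Real.rpow_nonneg h0t.le _)
      _ = 4 ^ q * (1 + ‖t‖) ^ (-(q - s * q)) := by
          rw [Real.norm_eq_abs, show -(q - s * q) = s * q + -q by ring,
            Real.rpow_add h0t]
          ring
  have hgint : Integrable g := by
    have hfin : (Module.finrank ℝ ℝ : ℝ) < q - s * q := by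
      simpa using hr
    have hint : Integrable (fun t : ℝ => 4 ^ q * (1 + ‖t‖) ^ (-(q - s * q))) :=
      (integrable_one_add_norm hfin).const_mul _
    refine hint.mono' hmeas.aestronglyMeasurable (Filter.Eventually.of_forall fun t => ?_)
    rw [Real.norm_eq_abs, abs_of_nonneg (hg0 t)]
    exact hgle t
  have hGint : Integrable (fun x : Fin d → ℝ => ∏ ℓ, g (x ℓ)) :=
    Integrable.fintype_prod (f := fun _ : Fin d => g) fun _ => hgint
  refine ⟨∫⁻ x : Fin d → ℝ, ENNReal.ofReal (∏ ℓ, g (x ℓ)), hGint.lintegral_lt_top,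
    fun x' hx' => ?_⟩
  have key : ∀ ξ : EuclideanSpace ℝ (Fin d),
      ENNReal.ofReal ((1 + ‖ξ‖ ^ 2) ^ a *
          ∏ ℓ, |2 * Real.sin (ξ ℓ * (1 - x' ℓ) / 2) / ξ ℓ| ^ q)
        ≤ ENNReal.ofReal (∏ ℓ, g (ξ ℓ)) := by
    intro ξ
    apply ENNReal.ofReal_le_ofReal
    have hterm : ∀ ℓ, |2 * Real.sin (ξ ℓ * (1 - x' ℓ) / 2) / ξ ℓ| ≤ min 1 (2 / |ξ ℓ|) := by
      intro ℓ
      obtain ⟨hx0, hx1⟩ := hx' ℓ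
      rcases eq_or_ne (ξ ℓ) 0 with h | h
      · simp [h]
      · have ht0 : (0:ℝ) < |ξ ℓ| := abs_pos.mpr h
        rw [abs_div]
        refine le_min ?_ ?_
        · rw [div_le_one ht0]
          have hsin : |Real.sin (ξ ℓ * (1 - x' ℓ) / 2)| ≤ |ξ ℓ * (1 - x' ℓ) / 2| :=
            Real.abs_sin_le_abs
          have habs : |ξ ℓ * (1 - x' ℓ) / 2| = |ξ ℓ| * |1 - x' ℓ| / 2 := by
            rw [abs_div, abs_mul]; norm_num
          have h1x : |1 - x' ℓ| ≤ 1 := by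
            rw [abs_of_nonneg (by linarith)]; linarith
          rw [abs_mul, abs_two]
          nlinarith [abs_nonneg (Real.sin (ξ ℓ * (1 - x' ℓ) / 2))]
        · rw [div_le_div_iff₀ ht0 ht0, abs_mul, abs_two]
          have : |Real.sin (ξ ℓ * (1 - x' ℓ) / 2)| ≤ 1 :=
            abs_le.mpr ⟨Real.neg_one_le_sin _, Real.sin_le_one _⟩
          nlinarith
    have hA : (1 + ‖ξ‖ ^ 2) ^ a ≤ ∏ ℓ, (1 + (ξ ℓ) ^ 2) ^ a := by
      have hnorm : ‖ξ‖ ^ 2 = ∑ ℓ, (ξ ℓ) ^ 2 := by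
        rw [EuclideanSpace.norm_eq, Real.sq_sqrt (Finset.sum_nonneg fun i _ => sq_nonneg _)]
        simp [Real.norm_eq_abs, sq_abs]
      calc (1 + ‖ξ‖ ^ 2) ^ a ≤ (∏ ℓ, (1 + (ξ ℓ) ^ 2)) ^ a := by
            apply Real.rpow_le_rpow (by positivity) ?_ ha0
            rw [hnorm]
            exact aux_one_add_sum_le_prod _ _ fun i _ => sq_nonneg _
        _ = ∏ ℓ, (1 + (ξ ℓ) ^ 2) ^ a :=
            (Real.finset_prod_rpow _ _ (fun i _ => by positivity) _).symm
    have hB : ∏ ℓ, |2 * Real.sin (ξ ℓ * (1 - x' ℓ) / 2) / ξ ℓ| ^ q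
        ≤ ∏ ℓ, min 1 (2 / |ξ ℓ|) ^ q :=
      Finset.prod_le_prod (fun i _ => Real.rpow_nonneg (abs_nonneg _) _)
        (fun i _ => Real.rpow_le_rpow (abs_nonneg _) (hterm i) hq0.le)
    calc (1 + ‖ξ‖ ^ 2) ^ a * ∏ ℓ, |2 * Real.sin (ξ ℓ * (1 - x' ℓ) / 2) / ξ ℓ| ^ q
        ≤ (∏ ℓ, (1 + (ξ ℓ) ^ 2) ^ a) * ∏ ℓ, min 1 (2 / |ξ ℓ|) ^ q :=
          mul_le_mul hA hB
            (Finset.prod_nonneg fun i _ => Real.rpow_nonneg (abs_nonneg _) _)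
            (Finset.prod_nonneg fun i _ => Real.rpow_nonneg (by positivity) _)
      _ = ∏ ℓ, g (ξ ℓ) := by rw [← Finset.prod_mul_distrib]
  calc (∫⁻ ξ : EuclideanSpace ℝ (Fin d),
          ENNReal.ofReal ((1 + ‖ξ‖ ^ 2) ^ a *
            ∏ ℓ, |2 * Real.sin (ξ ℓ * (1 - x' ℓ) / 2) / ξ ℓ| ^ q))
      ≤ ∫⁻ ξ : EuclideanSpace ℝ (Fin d), ENNReal.ofReal (∏ ℓ, g (ξ ℓ)) :=
        lintegral_mono key
    _ = ∫⁻ x : Fin d → ℝ, ENNReal.ofReal (∏ ℓ, g (x ℓ)) :=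
        (EuclideanSpace.volume_preserving_symm_measurableEquiv_toLp (Fin d)).lintegral_comp_emb
          (MeasurableEquiv.measurableEmbedding _) (fun x => ENNReal.ofReal (∏ ℓ, g (x ℓ)))
end

section
/- Let F and G be separable Banach spaces, let μ_N (N ∈ ℕ) and μ be Borel probability measures on F with μ_N → μ weakly, and let Φ : F × G → ℝ be jointly measurable, non-negative, bounded on bounded subsets of F × G (WD2), and such that u ↦ Φ(u,y) is continuous on F for every y ∈ G (PC1). Then for every y ∈ G the posterior distributions μ_N^y(A) = (Z_y^N)^{-1} ∫_A exp(−Φ(u,y)) μ_N(du), with Z_y^N = ∫_F exp(−Φ(u,y)) μ_N(du), converge weakly to μ^y(A) = Z_y^{-1} ∫_A exp(−Φ(u,y)) μ(du), with Z_y = ∫_F exp(−Φ(u,y)) μ(du). -/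
open MeasureTheory Filter
open scoped ENNReal NNReal

lemma posterior_integral_eq {F G : Type*} [MeasurableSpace F]
    [TopologicalSpace F] [BorelSpace F]
    (ν : Measure F) [IsProbabilityMeasure ν] (Φ : F × G → ℝ) (y : G)
    (hc : Continuous (fun u => Φ (u, y))) (hnn : ∀ z, 0 ≤ Φ z)
    (g : F → ℝ) :
    ∫ u, g u ∂(posteriorMeasure ν Φ y)
      = (∫ u, Real.exp (-Φ (u, y)) ∂ν)⁻¹ * ∫ u, Real.exp (-Φ (u, y)) * g u ∂ν := by
  set f : F → ℝ := fun u => Real.exp (-Φ (u, y)) with hf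
  have hfc : Continuous f := Real.continuous_exp.comp hc.neg
  have hfpos : ∀ u, 0 < f u := fun u => Real.exp_pos _
  have hfle : ∀ u, f u ≤ 1 := fun u => Real.exp_le_one_iff.2 (neg_nonpos.2 (hnn _))
  have hfint : Integrable f ν := by
    refine (integrable_const (1:ℝ)).mono' hfc.aestronglyMeasurable ?_
    exact Filter.Eventually.of_forall fun u => by
      rw [Real.norm_eq_abs, abs_of_pos (hfpos u)]; exact hfle u
  have hZ : (∫⁻ u, ENNReal.ofReal (f u) ∂ν) = ENNReal.ofReal (∫ u, f u ∂ν) :=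
    (ofReal_integral_eq_lintegral_ofReal hfint
      (Filter.Eventually.of_forall fun u => (hfpos u).le)).symm
  have hZpos : 0 < ∫ u, f u ∂ν := by
    rw [integral_pos_iff_support_of_nonneg (fun u => (hfpos u).le) hfint]
    have : Function.support f = Set.univ := by
      ext u; simp [Function.mem_support, (hfpos u).ne']
    rw [this]
    simp [measure_univ]
  rw [posteriorMeasure, integral_smul_measure, hZ]
  have hwd : (fun u => ENNReal.ofReal (f u)) = fun u => ((f u).toNNReal : ℝ≥0∞) := rfl
  rw [hwd, integral_withDensity_eq_integral_smul
    (hfc.measurable.real_toNNReal) g]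
  have : ∀ u, (f u).toNNReal • g u = f u * g u := fun u => by
    simp [NNReal.smul_def, Real.coe_toNNReal _ (hfpos u).le]
  simp only [this]
  rw [ENNReal.toReal_inv, ENNReal.toReal_ofReal hZpos.le, smul_eq_mul]

/-- Let `μ_N → μ` weakly on a separable Banach space `F`, and let
`Φ : F × G → ℝ` be jointly measurable, non-negative, bounded on bounded subsets of `F × G`
(WD2), with `u ↦ Φ(u,y)` continuous for every `y` (PC1).  Then for every `y` the posterior
distributions `μ_N^y ∝ exp(−Φ(u,y)) μ_N(du)` converge weakly to
`μ^y ∝ exp(−Φ(u,y)) μ(du)`. -/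
theorem posterior_converges_weakly_of_prior_converges_weakly
    {F G : Type*}
    [NormedAddCommGroup F] [NormedSpace ℝ F] [CompleteSpace F]
    [TopologicalSpace.SeparableSpace F] [MeasurableSpace F] [BorelSpace F]
    [NormedAddCommGroup G] [NormedSpace ℝ G] [CompleteSpace G]
    [TopologicalSpace.SeparableSpace G] [MeasurableSpace G] [BorelSpace G]
    (μN : ℕ → Measure F) (μ : Measure F)
    [∀ N, IsProbabilityMeasure (μN N)] [IsProbabilityMeasure μ]
    (hweak : ∀ g : F → ℝ, Continuous g → (∃ C : ℝ, ∀ u, |g u| ≤ C) →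
      Tendsto (fun N => ∫ u, g u ∂(μN N)) atTop (nhds (∫ u, g u ∂μ)))
    (Φ : F × G → ℝ) (hΦmeas : Measurable Φ)
    (hΦnonneg : ∀ z, 0 ≤ Φ z)
    (hWD2 : ∀ S : Set (F × G), Bornology.IsBounded S → ∃ C : ℝ, ∀ z ∈ S, |Φ z| ≤ C)
    (hPC1 : ∀ y : G, Continuous (fun u => Φ (u, y))) :
    ∀ y : G, ∀ g : F → ℝ, Continuous g → (∃ C : ℝ, ∀ u, |g u| ≤ C) →
      Tendsto (fun N => ∫ u, g u ∂(posteriorMeasure (μN N) Φ y)) atTop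
        (nhds (∫ u, g u ∂(posteriorMeasure μ Φ y))) := by
  intro y g hgc hgb
  obtain ⟨C, hC⟩ := hgb
  set f : F → ℝ := fun u => Real.exp (-Φ (u, y)) with hf
  have hfc : Continuous f := Real.continuous_exp.comp (hPC1 y).neg
  have hfpos : ∀ u, 0 < f u := fun u => Real.exp_pos _
  have hfle : ∀ u, f u ≤ 1 := fun u => Real.exp_le_one_iff.2 (neg_nonpos.2 (hΦnonneg _))
  have hfb : ∀ u, |f u| ≤ 1 := fun u => by
    rw [abs_of_pos (hfpos u)]; exact hfle u
  have hfint : Integrable f μ := by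
    refine (integrable_const (1:ℝ)).mono' hfc.aestronglyMeasurable ?_
    exact Filter.Eventually.of_forall fun u => by rw [Real.norm_eq_abs]; exact hfb u
  have hZpos : 0 < ∫ u, f u ∂μ := by
    rw [integral_pos_iff_support_of_nonneg (fun u => (hfpos u).le) hfint]
    have : Function.support f = Set.univ := by
      ext u; simp [Function.mem_support, (hfpos u).ne']
    rw [this]; simp [measure_univ]
  simp only [fun N => posterior_integral_eq (μN N) Φ y (hPC1 y) hΦnonneg g,
    posterior_integral_eq μ Φ y (hPC1 y) hΦnonneg g]
  have hZ : Tendsto (fun N => ∫ u, f u ∂(μN N)) atTop (nhds (∫ u, f u ∂μ)) :=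
    hweak f hfc ⟨1, hfb⟩
  have hI : Tendsto (fun N => ∫ u, f u * g u ∂(μN N)) atTop (nhds (∫ u, f u * g u ∂μ)) := by
    refine hweak (fun u => f u * g u) (hfc.mul hgc) ⟨C, fun u => ?_⟩
    calc |f u * g u| = |f u| * |g u| := abs_mul _ _
      _ ≤ 1 * C := mul_le_mul (hfb u) (hC u) (abs_nonneg _)
          zero_le_one
      _ = C := one_mul C
  exact (hZ.inv₀ hZpos.ne').mul hI
end
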